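/- arXiv:2412.13075 — 7 statements merged into one kernel-verified Lean document; each statement's English description precedes it below -/
import Mathlib

section
/- For every integer k, the polynomial f_{1,k}(x) = x^3 - 3(9k^2+3k+1)x + (6k+1)(9k^2+3k+1) is irreducible over Q. -/
/-!
Reduce the integral model of `f_{1,k}` modulo 2: since `9k² + 3k + 1 = 3k(3k + 1) + 1` is odd,
both non-leading coefficients are odd and the reduction is `X³ + X + 1`, which has no root in `𝔽₂`
and hence is irreducible. A monic integer polynomial with an irreducible reduction is irreducible
over `ℤ`, and by Gauss's lemma over `ℚ`.
-/

open Polynomial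

theorem Polynomial.Monic.irreducible_map_fraction_map_of_irreducible_map
    {R K S : Type*} [CommRing R] [IsDomain R] [IsIntegrallyClosed R] [Field K] [Algebra R K]
    [IsFractionRing R K] [CommRing S] [IsDomain S] (φ : R →+* S) {f : R[X]} (hf : f.Monic)
    (h : Irreducible (f.map φ)) : Irreducible (f.map (algebraMap R K)) :=
  hf.irreducible_iff_irreducible_map_fraction_map.mp (hf.irreducible_of_irreducible_map φ f h)

theorem irreducible_X_pow_three_add_X_add_one_zmod_two :
    Irreducible (X ^ 3 + X + 1 : (ZMod 2)[X]) := by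
  have hdeg : (X ^ 3 + X + 1 : (ZMod 2)[X]).natDegree = 3 := by compute_degree!
  refine irreducible_of_degree_le_three_of_not_isRoot (by simp [hdeg]) fun a => ?_
  simp only [IsRoot, eval_add, eval_pow, eval_X, eval_one]
  revert a
  decide

noncomputable def f1 (k : ℤ) : ℤ[X] :=
  X ^ 3 - C (3 * (9 * k ^ 2 + 3 * k + 1)) * X + C ((6 * k + 1) * (9 * k ^ 2 + 3 * k + 1))

theorem f1_monic (k : ℤ) : (f1 k).Monic := by
  unfold f1
  monicity!

theorem f1_map_zmod_two (k : ℤ) : (f1 k).map (Int.castRingHom (ZMod 2)) = X ^ 3 + X + 1 := by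
  have hcoeff : ∀ x : ZMod 2,
      3 * (9 * x ^ 2 + 3 * x + 1) = 1 ∧ (6 * x + 1) * (9 * x ^ 2 + 3 * x + 1) = 1 := by
    decide
  obtain ⟨hlin, hconst⟩ := hcoeff k
  rw [f1, Polynomial.map_add, Polynomial.map_sub, Polynomial.map_mul, Polynomial.map_pow, map_X,
    map_C, map_C, eq_intCast, eq_intCast]
  push_cast
  rw [hlin, hconst, map_one, one_mul, sub_eq_add_neg, CharTwo.neg_eq]

theorem f1_map_rat (k : ℤ) :
    (f1 k).map (algebraMap ℤ ℚ) = X ^ 3 - C (3 * (9 * (k : ℚ) ^ 2 + 3 * k + 1)) * X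
      + C ((6 * (k : ℚ) + 1) * (9 * (k : ℚ) ^ 2 + 3 * k + 1)) := by
  rw [f1, Polynomial.map_add, Polynomial.map_sub, Polynomial.map_mul, Polynomial.map_pow, map_X,
    map_C, map_C]
  push_cast
  rfl

theorem f1k_irreducible (k : ℤ) :
    Irreducible (X ^ 3 - C (3 * (9 * (k : ℚ) ^ 2 + 3 * k + 1)) * X
      + C ((6 * (k : ℚ) + 1) * (9 * (k : ℚ) ^ 2 + 3 * k + 1))) := by
  rw [← f1_map_rat]
  refine (f1_monic k).irreducible_map_fraction_map_of_irreducible_map (Int.castRingHom (ZMod 2)) ?_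
  rw [f1_map_zmod_two]
  exact irreducible_X_pow_three_add_X_add_one_zmod_two
end

section
/- For every integer k, the discriminant of f_{1,k}(x) = x^3 - 3δ_1 x + (6k+1)δ_1, where δ_1 = 9k^2 + 3k + 1, equals 3^4 · δ_1^2; in particular it is a perfect square. -/
/-!
By Vieta, whenever a depressed cubic `x^3 + p x + q` factors as `(x - r₁)(x - r₂)(x - r₃)`, the
squared Vandermonde product of the `rᵢ` is `-4 p^3 - 27 q^2`. With `p = -3δ₁` and `q = (6k+1)δ₁` this is
`27 δ₁^2 (4δ₁ - (6k+1)^2)`, and `4δ₁ - (6k+1)^2 = 3`.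
-/

open Polynomial

namespace Cubic

theorem discr_eq_of_toPoly_eq_prod_X_sub_C {R : Type*} [CommRing R] {P : Cubic R} {x y z : R}
    (h : P.toPoly = (X - C x) * (X - C y) * (X - C z)) :
    P.discr = ((x - y) * (x - z) * (y - z)) ^ 2 := by
  rw [prod_X_sub_C_eq, toPoly_injective] at h
  subst h
  simp only [discr]
  ring

theorem toPoly_depressed {R : Type*} [Semiring R] (p q : R) :
    toPoly ⟨1, 0, p, q⟩ = X ^ 3 + C p * X + C q := by
  simp [toPoly]

theorem discr_depressed {R : Type*} [CommRing R] (p q : R) :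
    discr ⟨1, 0, p, q⟩ = -4 * p ^ 3 - 27 * q ^ 2 := by
  simp only [discr]
  ring

end Cubic

theorem sq_vandermonde_eq_of_depressed_cubic_eq_prod {R : Type*} [CommRing R] {p q x y z : R}
    (h : X ^ 3 + C p * X + C q = (X - C x) * (X - C y) * (X - C z)) :
    ((x - y) * (x - z) * (y - z)) ^ 2 = -4 * p ^ 3 - 27 * q ^ 2 := by
  rw [← Cubic.toPoly_depressed] at h
  rw [← Cubic.discr_eq_of_toPoly_eq_prod_X_sub_C h, Cubic.discr_depressed]

theorem depressed_discr_f1k {R : Type*} [CommRing R] (k : R) :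
    -4 * (-(3 * (9 * k ^ 2 + 3 * k + 1))) ^ 3 - 27 * ((6 * k + 1) * (9 * k ^ 2 + 3 * k + 1)) ^ 2
      = 3 ^ 4 * (9 * k ^ 2 + 3 * k + 1) ^ 2 := by
  ring

theorem disc_f1k (k : ℤ) (r₁ r₂ r₃ : ℂ)
    (h : (X ^ 3 - C ((3 * (9 * k ^ 2 + 3 * k + 1) : ℤ) : ℂ) * X
        + C (((6 * k + 1) * (9 * k ^ 2 + 3 * k + 1) : ℤ) : ℂ)) =
      (X - C r₁) * (X - C r₂) * (X - C r₃)) :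
    ((r₁ - r₂) * (r₁ - r₃) * (r₂ - r₃)) ^ 2
      = ((3 ^ 4 * (9 * k ^ 2 + 3 * k + 1) ^ 2 : ℤ) : ℂ)
    ∧ ∃ n : ℤ, (3 ^ 4 * (9 * k ^ 2 + 3 * k + 1) ^ 2 : ℤ) = n ^ 2 := by
  rw [sub_eq_add_neg, ← neg_mul, ← C_neg] at h
  refine ⟨?_, 9 * (9 * k ^ 2 + 3 * k + 1), by ring⟩
  rw [sq_vandermonde_eq_of_depressed_cubic_eq_prod h]
  exact_mod_cast depressed_discr_f1k k
end

section
/- For every integer k, the discriminant of f_{2,k}(x) = x^3 - δ_2 x + (2k+1)δ_2, where δ_2 = 27k^2 + 27k + 7, equals δ_2^2; in particular it is a perfect square. -/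
open Polynomial

lemma coeffs_eq_of_depressed_cubic_eq_prod {R : Type*} [CommRing R] {a b r₁ r₂ r₃ : R}
    (h : X ^ 3 + C a * X + C b = (X - C r₁) * (X - C r₂) * (X - C r₃)) :
    r₁ + r₂ + r₃ = 0 ∧ r₁ * r₂ + r₁ * r₃ + r₂ * r₃ = a ∧ r₁ * r₂ * r₃ = -b := by
  have hexpand : (X - C r₁) * (X - C r₂) * (X - C r₃) = X ^ 3 - C (r₁ + r₂ + r₃) * X ^ 2
      + C (r₁ * r₂ + r₁ * r₃ + r₂ * r₃) * X - C (r₁ * r₂ * r₃) := by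
    simp only [map_add, map_mul]
    ring
  rw [hexpand] at h
  have h2 := congrArg (coeff · 2) h
  have h1 := congrArg (coeff · 1) h
  have h0 := congrArg (coeff · 0) h
  simp only [coeff_add, coeff_sub, coeff_C_mul, coeff_X_pow, coeff_X, coeff_C] at h2 h1 h0
  norm_num at h2 h1 h0
  exact ⟨by linear_combination h2, h1.symm, by linear_combination h0⟩

theorem sq_prod_sub_roots_of_depressed_cubic {R : Type*} [CommRing R] {a b r₁ r₂ r₃ : R}
    (h : X ^ 3 + C a * X + C b = (X - C r₁) * (X - C r₂) * (X - C r₃)) :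
    ((r₁ - r₂) * (r₁ - r₃) * (r₂ - r₃)) ^ 2 = -4 * a ^ 3 - 27 * b ^ 2 := by
  obtain ⟨hs, he, hp⟩ := coeffs_eq_of_depressed_cubic_eq_prod h
  -- In terms of `eᵢ`, the left side is `e₁²e₂² - 4e₂³ - 4e₁³e₃ - 27e₃² + 18e₁e₂e₃`.
  linear_combination
    ((r₁ + r₂ + r₃) * (r₁ * r₂ + r₁ * r₃ + r₂ * r₃) ^ 2 - 4 * (r₁ + r₂ + r₃) ^ 2 * (r₁ * r₂ * r₃)
      + 18 * (r₁ * r₂ + r₁ * r₃ + r₂ * r₃) * (r₁ * r₂ * r₃)) * hs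
    - 4 * ((r₁ * r₂ + r₁ * r₃ + r₂ * r₃) ^ 2 + (r₁ * r₂ + r₁ * r₃ + r₂ * r₃) * a + a ^ 2) * he
    - 27 * (r₁ * r₂ * r₃ - b) * hp

theorem disc_f2k (k : ℤ) (r₁ r₂ r₃ : ℂ)
    (h : (X ^ 3 - C (((27 * k ^ 2 + 27 * k + 7) : ℤ) : ℂ) * X
        + C (((2 * k + 1) * (27 * k ^ 2 + 27 * k + 7) : ℤ) : ℂ)) =
      (X - C r₁) * (X - C r₂) * (X - C r₃)) :
    ((r₁ - r₂) * (r₁ - r₃) * (r₂ - r₃)) ^ 2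
      = (((27 * k ^ 2 + 27 * k + 7) ^ 2 : ℤ) : ℂ)
    ∧ ∃ n : ℤ, ((27 * k ^ 2 + 27 * k + 7) ^ 2 : ℤ) = n ^ 2 := by
  set δ : ℤ := 27 * k ^ 2 + 27 * k + 7 with hδ
  have hdepressed : X ^ 3 + C (-(δ : ℂ)) * X + C (((2 * k + 1) * δ : ℤ) : ℂ) =
      (X - C r₁) * (X - C r₂) * (X - C r₃) := by
    rw [← h, C_neg, neg_mul, ← sub_eq_add_neg]
  refine ⟨?_, δ, rfl⟩
  -- `-4 (-δ)³ - 27 ((2k+1) δ)² = δ² (4δ - 27 (2k+1)²)` and `4δ - 27 (2k+1)² = 1`.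
  rw [sq_prod_sub_roots_of_depressed_cubic hdepressed]
  push_cast [hδ]
  ring
end

section
/- For every integer k, the Galois group over Q of f_{1,k}(x) = x^3 - 3δ_1 x + (6k+1)δ_1, where δ_1 = 9k^2 + 3k + 1, is cyclic of order 3. -/
/-!
If `α` is a root of `f = X³ - 3δX + (6t+1)δ` with `δ = 9t² + 3t + 1`, then so are
`β = α² + 3tα - 2δ` and `-α - β`; hence `f` splits in its stem field `ℚ[X]/(f)`.
For `t = k ∈ ℤ` the cubic is irreducible (it has no root modulo 9), so the stem field is its
splitting field, of degree 3, and the Galois group has prime order 3.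
-/

open Polynomial Module

theorem finrank_splittingField_eq_natDegree_of_splits_adjoinRoot {K : Type*} [Field K]
    {f : K[X]} [Fact (Irreducible f)] (h : (f.map (algebraMap K (AdjoinRoot f))).Splits) :
    finrank K f.SplittingField = f.natDegree := by
  have hstem : finrank K (AdjoinRoot f) = f.natDegree := finrank_quotient_span_eq_natDegree
  have : FiniteDimensional K (AdjoinRoot f) :=
    (AdjoinRoot.powerBasis (Fact.out : Irreducible f).ne_zero).finite
  obtain ⟨y, hy⟩ := (SplittingField.splits f).exists_eval_eq_zero (by
    rw [degree_map]; exact (degree_pos_of_irreducible Fact.out).ne')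
  let toStem : f.SplittingField →ₐ[K] AdjoinRoot f := SplittingField.lift f h
  let ofStem : AdjoinRoot f →ₐ[K] f.SplittingField :=
    AdjoinRoot.liftAlgHom f (Algebra.ofId K _) y ((eval₂_eq_eval_map _).trans hy)
  refine le_antisymm ?_ ?_
  · exact hstem ▸ LinearMap.finrank_le_finrank_of_injective
      (f := toStem.toLinearMap) toStem.injective
  · exact hstem ▸ LinearMap.finrank_le_finrank_of_injective
      (f := ofStem.toLinearMap) ofStem.injective

theorem Polynomial.Monic.aeval_rat_ne_zero_of_forall_eval_zmod_ne_zero {p : ℤ[X]}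
    (hp : p.Monic) {n : ℕ} (h : ∀ x : ZMod n, (p.map (Int.castRingHom (ZMod n))).eval x ≠ 0)
    (r : ℚ) : aeval r p ≠ 0 := by
  intro hr
  obtain ⟨m, rfl⟩ := isInteger_of_is_root_of_monic hp hr
  have hm : ((p.eval m : ℤ) : ℚ) = 0 := by simpa [aeval_def, eval₂_eq_eval_map] using hr
  apply h m
  simp [eval_map, Int.cast_eq_zero.mp hm]

section CyclicCubic

variable {R S : Type*} [CommRing R] [CommRing S]

/-- The paper's `f_{1,t}`, with `δ₁ = 9t² + 3t + 1`. -/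
noncomputable def cyclicCubic (t : R) : R[X] :=
  X ^ 3 - C (3 * (9 * t ^ 2 + 3 * t + 1)) * X + C ((6 * t + 1) * (9 * t ^ 2 + 3 * t + 1))

theorem eval_cyclicCubic (t x : R) : (cyclicCubic t).eval x =
    x ^ 3 - 3 * (9 * t ^ 2 + 3 * t + 1) * x + (6 * t + 1) * (9 * t ^ 2 + 3 * t + 1) := by
  simp [cyclicCubic]

theorem map_cyclicCubic (φ : R →+* S) (t : R) : (cyclicCubic t).map φ = cyclicCubic (φ t) := by
  simp only [cyclicCubic, Polynomial.map_add, Polynomial.map_sub, Polynomial.map_mul,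
    Polynomial.map_pow, map_X, map_C, map_add, map_mul, map_pow, map_ofNat, map_one,
    Polynomial.map_ofNat, Polynomial.map_one]

theorem monic_cyclicCubic [Nontrivial R] (t : R) : (cyclicCubic t).Monic := by
  unfold cyclicCubic; monicity!

theorem natDegree_cyclicCubic [Nontrivial R] (t : R) : (cyclicCubic t).natDegree = 3 := by
  unfold cyclicCubic; compute_degree!

theorem cyclicCubic_eq_mul_of_isRoot {t α : R} (hα : (cyclicCubic t).IsRoot α) :
    let β := α ^ 2 + 3 * t * α - 2 * (9 * t ^ 2 + 3 * t + 1)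
    cyclicCubic t = (X - C α) * (X - C β) * (X - C (-α - β)) := by
  have h := congrArg C hα.eq_zero
  rw [eval_cyclicCubic] at h
  simp only [cyclicCubic, map_add, map_sub, map_mul, map_pow, map_ofNat, map_one, map_zero,
    map_neg] at h ⊢
  linear_combination ((C α + 6 * C t + 1) * X - (C α ^ 2 + (6 * C t + 1) * C α - 1)) * h

theorem splits_map_adjoinRoot_cyclicCubic {K : Type*} [Field K] (t : K)
    [Fact (Irreducible (cyclicCubic t))] :
    ((cyclicCubic t).map (algebraMap K (AdjoinRoot (cyclicCubic t)))).Splits := by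
  have hroot := AdjoinRoot.isRoot_root (cyclicCubic t)
  rw [← AdjoinRoot.algebraMap_eq] at hroot
  rw [map_cyclicCubic] at hroot ⊢
  rw [cyclicCubic_eq_mul_of_isRoot hroot]
  exact ((Splits.X_sub_C _).mul (Splits.X_sub_C _)).mul (Splits.X_sub_C _)

theorem irreducible_cyclicCubic (k : ℤ) : Irreducible (cyclicCubic (k : ℚ)) := by
  rw [irreducible_iff_roots_eq_zero_of_degree_le_three (by rw [natDegree_cyclicCubic]; norm_num)
    (by rw [natDegree_cyclicCubic]), Multiset.eq_zero_iff_forall_notMem]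
  intro r hr
  -- Modulo 3 the cubic is `x³ + 1`, which has the root `-1`; modulo 9 it has none.
  refine (monic_cyclicCubic k).aeval_rat_ne_zero_of_forall_eval_zmod_ne_zero (n := 9) ?_ r ?_
  · simp only [map_cyclicCubic, eval_cyclicCubic, eq_intCast]
    intro x
    generalize (k : ZMod 9) = y
    revert x y
    decide
  · rw [aeval_def, eval₂_eq_eval_map, map_cyclicCubic]
    exact (mem_roots (monic_cyclicCubic _).ne_zero).mp hr

end CyclicCubic

theorem f1k_gal_cyclic_three (k : ℤ) :
    IsCyclic (X ^ 3 - C (3 * (9 * (k : ℚ) ^ 2 + 3 * k + 1)) * X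
      + C ((6 * (k : ℚ) + 1) * (9 * (k : ℚ) ^ 2 + 3 * k + 1))).Gal
    ∧ Nat.card (X ^ 3 - C (3 * (9 * (k : ℚ) ^ 2 + 3 * k + 1)) * X
      + C ((6 * (k : ℚ) + 1) * (9 * (k : ℚ) ^ 2 + 3 * k + 1))).Gal = 3 := by
  change IsCyclic (cyclicCubic (k : ℚ)).Gal ∧ Nat.card (cyclicCubic (k : ℚ)).Gal = 3
  have hirr := irreducible_cyclicCubic k
  have : Fact (Irreducible (cyclicCubic (k : ℚ))) := ⟨hirr⟩
  have hcard : Nat.card (cyclicCubic (k : ℚ)).Gal = 3 := by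
    rw [Gal.card_of_separable hirr.separable,
      finrank_splittingField_eq_natDegree_of_splits_adjoinRoot
        (splits_map_adjoinRoot_cyclicCubic _),
      natDegree_cyclicCubic]
  exact ⟨isCyclic_of_prime_card hcard, hcard⟩
end

section
/- There do not exist integers k and m such that the trinomials x^3 - 3(9k^2+3k+1)x + (6k+1)(9k^2+3k+1) and x^3 - (27m^2+27m+7)x + (2m+1)(27m^2+27m+7) are equal as polynomials. -/
open Polynomial

theorem coeff_X_pow_three_sub_C_mul_X_add_C_one {R : Type*} [Ring R] (a b : R) :
    (X ^ 3 - C a * X + C b : R[X]).coeff 1 = -a := by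
  simp [coeff_C]

theorem eq_of_X_pow_three_sub_C_mul_X_add_C_eq {R : Type*} [Ring R] {a b a' b' : R}
    (h : (X ^ 3 - C a * X + C b : R[X]) = X ^ 3 - C a' * X + C b') : a = a' := by
  simpa [coeff_X_pow_three_sub_C_mul_X_add_C_one] using congrArg (coeff · 1) h

-- Modulo 9 the left side is 3 and the right side is 7.
theorem three_mul_ne_twentySeven_mul_sq_add (k m : ℤ) :
    3 * (9 * k ^ 2 + 3 * k + 1) ≠ 27 * m ^ 2 + 27 * m + 7 := by
  omega

theorem F1_inter_F2_empty :
    ¬ ∃ k m : ℤ,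
      (X ^ 3 - C (3 * (9 * k ^ 2 + 3 * k + 1)) * X
        + C ((6 * k + 1) * (9 * k ^ 2 + 3 * k + 1)) : Polynomial ℤ)
      = X ^ 3 - C (27 * m ^ 2 + 27 * m + 7) * X
        + C ((2 * m + 1) * (27 * m ^ 2 + 27 * m + 7)) := by
  rintro ⟨k, m, h⟩
  exact three_mul_ne_twentySeven_mul_sq_add k m (eq_of_X_pow_three_sub_C_mul_X_add_C_eq h)
end

section
/- There exist infinitely many integers k such that 9k^2 + 3k + 1 is squarefree, and infinitely many integers k ≥ 0 such that 27k^2 + 27k + 7 is squarefree. -/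
/-!
Let `f = a X² + b X + c` have discriminant `D`. If a prime `p ∤ a D` has `p² ∣ f k` and
`p² ∣ f l`, then `p² ∣ (k - l) (a (k + l) + b)` while `p` divides at most one of the factors
(otherwise `p ∣ 2 a k + b`, hence `p ∣ D`). So among `p²` consecutive integers at most two have
`p² ∣ f k`: three of them would give `p² ∣ a (k + l) + b` and `p² ∣ a (k + m) + b`, hence
`p² ∣ l - m`. Thus at most `2 (M / p² + 1)` of the `k < M` have `p² ∣ f k`.
If `4` and `9` never divide a value and the prime factors of `a D` are at most `3`, every `k < M`
with `f k` not squarefree has `p² ∣ f k` for a prime `5 ≤ p ≤ L M`, `L = |a| + |b| + |c|`.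
Summing, there are at most `2 M ∑_{n > 4} n⁻² + 2 π (L M) ≤ 4 M / 5 + o(M)` such `k`, by
Chebyshev's bound `π x = O(x / log x)`, so squarefree values cannot be finitely many.
Both polynomials of the theorem have `D = -27`.
-/

open Finset Filter

theorem Int.exists_prime_sq_dvd_of_not_squarefree {n : ℤ} (hn : ¬Squarefree n) :
    ∃ p : ℕ, p.Prime ∧ (p : ℤ) ^ 2 ∣ n := by
  rw [← Int.squarefree_natAbs, Nat.squarefree_iff_prime_squarefree] at hn
  push Not at hn
  obtain ⟨p, hp, hpn⟩ := hn
  exact ⟨p, hp, by rw [sq, ← Nat.cast_mul, Int.natCast_dvd]; exact hpn⟩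

theorem eventually_primeCounting_le_mul {ε : ℝ} (hε : 0 < ε) :
    ∀ᶠ n : ℕ in atTop, (n.primeCounting : ℝ) ≤ ε * n := by
  have hlog : ∀ᶠ x : ℝ in atTop, (Real.log 4 + 1) / ε ≤ Real.log x :=
    Real.tendsto_log_atTop.eventually_ge_atTop _
  filter_upwards [tendsto_natCast_atTop_atTop.eventually
    ((Chebyshev.eventually_primeCounting_le one_pos).and (hlog.and (eventually_gt_atTop 1)))]
    with n ⟨hπ, hn, hn1⟩
  rw [Nat.floor_natCast] at hπ
  refine hπ.trans ((div_le_iff₀ (Real.log_pos hn1)).2 ?_)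
  rw [div_le_iff₀ hε] at hn
  nlinarith

theorem eventually_primeCounting_mul_le_mul (L : ℕ) {ε : ℝ} (hε : 0 < ε) :
    ∀ᶠ M : ℕ in atTop, ((L * M).primeCounting : ℝ) ≤ ε * M := by
  rcases L.eq_zero_or_pos with rfl | hL
  · filter_upwards with M
    simp only [zero_mul, Nat.primeCounting_zero, CharP.cast_eq_zero]
    positivity
  have hLM : Tendsto (L * ·) atTop atTop :=
    tendsto_atTop_mono (fun M => Nat.le_mul_of_pos_left M hL) tendsto_id
  filter_upwards [hLM.eventually
    (eventually_primeCounting_le_mul (div_pos hε (Nat.cast_pos.2 hL : (0 : ℝ) < L)))] with M hM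
  rwa [Nat.cast_mul, ← mul_assoc, div_mul_cancel₀ _ (by positivity)] at hM

section Quadratic

variable {a b c : ℤ}

theorem sq_dvd_sub_or_sq_dvd_add_of_sq_dvd_quadratic {p : ℤ} (hp : Prime p)
    (hD : ¬p ∣ b ^ 2 - 4 * a * c) {k l : ℤ} (hk : p ^ 2 ∣ a * k ^ 2 + b * k + c)
    (hl : p ^ 2 ∣ a * l ^ 2 + b * l + c) : p ^ 2 ∣ k - l ∨ p ^ 2 ∣ a * (k + l) + b := by
  have hprod : p ^ 2 ∣ (k - l) * (a * (k + l) + b) :=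
    (dvd_sub hk hl).trans (dvd_of_eq (by ring))
  by_cases hkl : p ∣ k - l
  · refine .inl (hp.pow_dvd_of_dvd_mul_right 2 (fun hsum => hD ?_) hprod)
    have hvertex : p ∣ 2 * a * k + b :=
      (dvd_add hsum (dvd_mul_of_dvd_right hkl a)).trans (dvd_of_eq (by ring))
    have hdisc : b ^ 2 - 4 * a * c = (2 * a * k + b) ^ 2 - 4 * a * (a * k ^ 2 + b * k + c) := by
      ring
    rw [hdisc]
    exact dvd_sub (dvd_pow hvertex two_ne_zero)
      (dvd_mul_of_dvd_right ((dvd_pow_self p two_ne_zero).trans hk) _)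
  · exact .inr (hp.pow_dvd_of_dvd_mul_left 2 hkl hprod)

theorem card_le_two_of_sq_dvd_quadratic {p : ℕ} (hp : p.Prime) (ha : ¬(p : ℤ) ∣ a)
    (hD : ¬(p : ℤ) ∣ b ^ 2 - 4 * a * c) {s : Finset ℕ}
    (hs : ∀ k ∈ s, (p : ℤ) ^ 2 ∣ a * k ^ 2 + b * k + c)
    (hblock : ∀ k ∈ s, ∀ l ∈ s, k / p ^ 2 = l / p ^ 2) : #s ≤ 2 := by
  have hpZ : Prime (p : ℤ) := Nat.prime_iff_prime_int.mp hp
  have heq : ∀ k ∈ s, ∀ l ∈ s, (p : ℤ) ^ 2 ∣ k - l → k = l := by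
    intro k hk l hl hdiff
    have hmod : l ≡ k [MOD p ^ 2] := Nat.modEq_iff_dvd.2 (by exact_mod_cast hdiff)
    rw [← Nat.div_add_mod k (p ^ 2), ← Nat.div_add_mod l (p ^ 2), hblock k hk l hl, hmod]
  have hsum : ∀ k ∈ s, ∀ l ∈ s, k ≠ l → (p : ℤ) ^ 2 ∣ a * (k + l) + b := fun k hk l hl hkl =>
    (sq_dvd_sub_or_sq_dvd_add_of_sq_dvd_quadratic hpZ hD (hs k hk) (hs l hl)).resolve_left
      (hkl ∘ heq k hk l hl)
  by_contra! hcard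
  obtain ⟨k, hk, l, hl, m, hm, hkl, hkm, hlm⟩ := two_lt_card.1 hcard
  have hdiff : (p : ℤ) ^ 2 ∣ a * (l - m) :=
    (dvd_sub (hsum k hk l hl hkl) (hsum k hk m hm hkm)).trans (dvd_of_eq (by ring))
  exact hlm (heq l hl m hm (hpZ.pow_dvd_of_dvd_mul_left 2 ha hdiff))

theorem card_filter_sq_dvd_quadratic_le {p : ℕ} (hp : p.Prime) (ha : ¬(p : ℤ) ∣ a)
    (hD : ¬(p : ℤ) ∣ b ^ 2 - 4 * a * c) (M : ℕ) :
    #((range M).filter fun k : ℕ => (p : ℤ) ^ 2 ∣ a * k ^ 2 + b * k + c) ≤ 2 * (M / p ^ 2 + 1) := by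
  refine (card_le_mul_card_image_of_maps_to (f := (· / p ^ 2)) (t := range (M / p ^ 2 + 1))
    (fun k hk => ?_) 2 (fun j _ => ?_)).trans_eq (by rw [card_range])
  · simp only [mem_filter, mem_range] at hk
    exact mem_range.2 (Nat.lt_succ_of_le (Nat.div_le_div_right hk.1.le))
  · refine card_le_two_of_sq_dvd_quadratic hp ha hD (fun k hk => ?_) (fun k hk l hl => ?_)
    · exact (mem_filter.1 (mem_filter.1 hk).1).2
    · rw [(mem_filter.1 hk).2, (mem_filter.1 hl).2]

theorem abs_quadratic_le {k M : ℕ} (hk : k < M) :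
    |a * k ^ 2 + b * k + c| ≤ ((a.natAbs + b.natAbs + c.natAbs : ℕ) : ℤ) * M ^ 2 := by
  have hkM : (k : ℤ) ≤ M := by exact_mod_cast hk.le
  have hk0 : (0 : ℤ) ≤ k := k.cast_nonneg
  have hM1 : (1 : ℤ) ≤ M := by exact_mod_cast hk.trans_le' k.zero_le
  push_cast
  calc |a * k ^ 2 + b * k + c| ≤ |a| * k ^ 2 + |b| * k + |c| := by
        refine (abs_add_le _ _).trans (add_le_add ((abs_add_le _ _).trans ?_) le_rfl)
        rw [abs_mul, abs_mul, abs_pow, abs_of_nonneg hk0]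
    _ ≤ |a| * M ^ 2 + |b| * M ^ 2 + |c| * M ^ 2 := by
        gcongr
        · nlinarith
        · exact le_mul_of_one_le_right (abs_nonneg c) (one_le_pow₀ hM1)
    _ = (|a| + |b| + |c|) * M ^ 2 := by ring

theorem le_mul_of_sq_dvd_quadratic {p k M : ℕ} (hkM : k < M) (hne : a * k ^ 2 + b * k + c ≠ 0)
    (hp : (p : ℤ) ^ 2 ∣ a * k ^ 2 + b * k + c) : p ≤ (a.natAbs + b.natAbs + c.natAbs) * M := by
  set L := a.natAbs + b.natAbs + c.natAbs
  have hle : (p : ℤ) ^ 2 ≤ L * M ^ 2 :=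
    (Int.le_of_dvd (abs_pos.2 hne) ((dvd_abs _ _).2 hp)).trans (abs_quadratic_le hkM)
  have hle' : p ^ 2 ≤ L * M ^ 2 := by exact_mod_cast hle
  by_contra! hlt
  have hsq : L * M ^ 2 ≤ (L * M) ^ 2 := by
    rw [mul_pow]
    exact Nat.mul_le_mul_right _ (Nat.le_self_pow two_ne_zero L)
  have := Nat.pow_lt_pow_left hlt two_ne_zero
  omega

open Classical in
theorem card_filter_not_squarefree_quadratic_le_sum
    (h4 : ∀ k : ℕ, ¬(4 : ℤ) ∣ a * k ^ 2 + b * k + c)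
    (h9 : ∀ k : ℕ, ¬(9 : ℤ) ∣ a * k ^ 2 + b * k + c)
    (hsmooth : ∀ p : ℕ, p.Prime → (p : ℤ) ∣ a * (b ^ 2 - 4 * a * c) → p ≤ 3) (M : ℕ) :
    #((range M).filter fun k : ℕ => ¬Squarefree (a * k ^ 2 + b * k + c)) ≤
      ∑ p ∈ {p ∈ Nat.primesLE ((a.natAbs + b.natAbs + c.natAbs) * M) | 5 ≤ p},
        2 * (M / p ^ 2 + 1) := by
  set P := {p ∈ Nat.primesLE ((a.natAbs + b.natAbs + c.natAbs) * M) | 5 ≤ p}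
  have hcover : ((range M).filter fun k : ℕ => ¬Squarefree (a * k ^ 2 + b * k + c)) ⊆
      P.biUnion fun p => (range M).filter fun k : ℕ => (p : ℤ) ^ 2 ∣ a * k ^ 2 + b * k + c := by
    intro k hk
    simp only [mem_filter, mem_range] at hk
    obtain ⟨p, hp, hpk⟩ := Int.exists_prime_sq_dvd_of_not_squarefree hk.2
    have hp2 : p ≠ 2 := by rintro rfl; exact h4 k (by simpa using hpk)
    have hp3 : p ≠ 3 := by rintro rfl; exact h9 k (by simpa using hpk)
    have hp4 : p ≠ 4 := by rintro rfl; norm_num at hp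
    have hne : a * k ^ 2 + b * k + c ≠ 0 := fun h => h4 k (h ▸ dvd_zero 4)
    simp only [mem_biUnion, mem_filter, mem_range, Nat.mem_primesLE, P]
    exact ⟨p, ⟨⟨le_mul_of_sq_dvd_quadratic hk.1 hne hpk, hp⟩, by have := hp.two_le; omega⟩,
      hk.1, hpk⟩
  refine (card_le_card hcover).trans (card_biUnion_le.trans (sum_le_sum fun p hp => ?_))
  simp only [mem_filter, Nat.mem_primesLE, P] at hp
  have hcoprime : ¬(p : ℤ) ∣ a * (b ^ 2 - 4 * a * c) := fun h => by
    have := hsmooth p hp.1.2 h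
    omega
  exact card_filter_sq_dvd_quadratic_le hp.1.2 (fun h => hcoprime (dvd_mul_of_dvd_left h _))
    (fun h => hcoprime (dvd_mul_of_dvd_right h _)) M

open Classical in
theorem card_filter_not_squarefree_quadratic_le (h4 : ∀ k : ℕ, ¬(4 : ℤ) ∣ a * k ^ 2 + b * k + c)
    (h9 : ∀ k : ℕ, ¬(9 : ℤ) ∣ a * k ^ 2 + b * k + c)
    (hsmooth : ∀ p : ℕ, p.Prime → (p : ℤ) ∣ a * (b ^ 2 - 4 * a * c) → p ≤ 3) (M : ℕ) :
    (#((range M).filter fun k : ℕ => ¬Squarefree (a * k ^ 2 + b * k + c)) : ℝ) ≤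
      4 / 5 * M + 2 * ((a.natAbs + b.natAbs + c.natAbs) * M).primeCounting := by
  set L := a.natAbs + b.natAbs + c.natAbs
  set P := {p ∈ Nat.primesLE (L * M) | 5 ≤ p}
  have hcount := card_filter_not_squarefree_quadratic_le_sum h4 h9 hsmooth M
  have hrecip : ∑ p ∈ P, ((p : ℝ) ^ 2)⁻¹ ≤ 2 / 5 := by
    have hsub : P ⊆ Ioo 4 (L * M + 1) := fun p hp => by
      simp only [mem_filter, Nat.mem_primesLE, P] at hp
      simp only [mem_Ioo]
      omega
    refine (sum_le_sum_of_subset_of_nonneg hsub fun _ _ _ => by positivity).trans ?_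
    convert sum_Ioo_inv_sq_le (α := ℝ) 4 (L * M + 1) using 1
    norm_num
  have hcardP : #P ≤ (L * M).primeCounting :=
    (card_filter_le _ _).trans (Nat.primesLE_card_eq_primeCounting _).le
  calc (#((range M).filter fun k : ℕ => ¬Squarefree (a * k ^ 2 + b * k + c)) : ℝ)
      ≤ ∑ p ∈ P, ((2 * (M / p ^ 2 + 1) : ℕ) : ℝ) := by exact_mod_cast hcount
    _ ≤ ∑ p ∈ P, (2 * M * ((p : ℝ) ^ 2)⁻¹ + 2) := sum_le_sum fun p _ => by
        have := Nat.cast_div_le (α := ℝ) (m := M) (n := p ^ 2)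
        push_cast at this ⊢
        rw [← div_eq_mul_inv, mul_div_assoc]
        linarith
    _ = 2 * M * ∑ p ∈ P, ((p : ℝ) ^ 2)⁻¹ + 2 * #P := by
        rw [sum_add_distrib, ← mul_sum, sum_const, nsmul_eq_mul, mul_comm (#P : ℝ)]
    _ ≤ 2 * M * (2 / 5) + 2 * (L * M).primeCounting := by
        gcongr
    _ = 4 / 5 * M + 2 * (L * M).primeCounting := by ring

theorem infinite_setOf_squarefree_quadratic (h4 : ∀ k : ℕ, ¬(4 : ℤ) ∣ a * k ^ 2 + b * k + c)
    (h9 : ∀ k : ℕ, ¬(9 : ℤ) ∣ a * k ^ 2 + b * k + c)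
    (hsmooth : ∀ p : ℕ, p.Prime → (p : ℤ) ∣ a * (b ^ 2 - 4 * a * c) → p ≤ 3) :
    {k : ℕ | Squarefree (a * k ^ 2 + b * k + c)}.Infinite := by
  classical
  intro hfin
  set C := #hfin.toFinset
  obtain ⟨M, hπ, hM⟩ := ((eventually_primeCounting_mul_le_mul (a.natAbs + b.natAbs + c.natAbs)
    (by norm_num : (0 : ℝ) < 1 / 20)).and
    (tendsto_natCast_atTop_atTop.eventually_gt_atTop (10 * (C : ℝ)))).exists
  set good := (range M).filter fun k : ℕ => Squarefree (a * k ^ 2 + b * k + c)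
  set bad := (range M).filter fun k : ℕ => ¬Squarefree (a * k ^ 2 + b * k + c)
  have hgood : (#good : ℝ) ≤ C := by
    exact_mod_cast card_le_card fun k hk => by simpa using (mem_filter.1 hk).2
  have hsplit : (#good : ℝ) + #bad = M := by
    exact_mod_cast (card_filter_add_card_filter_not _).trans (card_range M)
  linarith [card_filter_not_squarefree_quadratic_le h4 h9 hsmooth M]

end Quadratic

theorem not_dvd_quadratic_of_forall_zmod {n : ℕ} {a b c : ℤ}
    (h : ∀ x : ZMod n, (a : ZMod n) * x ^ 2 + b * x + c ≠ 0) (k : ℤ) :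
    ¬(n : ℤ) ∣ a * k ^ 2 + b * k + c := fun hdvd =>
  h k (by exact_mod_cast (ZMod.intCast_zmod_eq_zero_iff_dvd _ n).2 hdvd)

theorem Nat.Prime.le_three_of_dvd_three_pow {p n : ℕ} {m : ℤ} (hp : p.Prime)
    (hm : m.natAbs = 3 ^ n) (h : (p : ℤ) ∣ m) : p ≤ 3 := by
  rw [Int.natCast_dvd, hm] at h
  exact ((Nat.prime_dvd_prime_iff_eq hp Nat.prime_three).1 (hp.dvd_of_dvd_pow h)).le

theorem infinitely_many_squarefree_values :
    {k : ℤ | Squarefree (9 * k ^ 2 + 3 * k + 1)}.Infinite ∧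
    {k : ℤ | 0 ≤ k ∧ Squarefree (27 * k ^ 2 + 27 * k + 7)}.Infinite := by
  have h₁ := infinite_setOf_squarefree_quadratic (a := 9) (b := 3) (c := 1)
    (fun k => not_dvd_quadratic_of_forall_zmod (n := 4) (by decide) k)
    (fun k => not_dvd_quadratic_of_forall_zmod (n := 9) (by decide) k)
    (fun _ hp => hp.le_three_of_dvd_three_pow (n := 5) (by norm_num))
  have h₂ := infinite_setOf_squarefree_quadratic (a := 27) (b := 27) (c := 7)
    (fun k => not_dvd_quadratic_of_forall_zmod (n := 4) (by decide) k)
    (fun k => not_dvd_quadratic_of_forall_zmod (n := 9) (by decide) k)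
    (fun _ hp => hp.le_three_of_dvd_three_pow (n := 6) (by norm_num))
  refine ⟨(h₁.image Nat.cast_injective.injOn).mono ?_, (h₂.image Nat.cast_injective.injOn).mono ?_⟩
  · rintro _ ⟨k, hk, rfl⟩
    exact hk
  · rintro _ ⟨k, hk, rfl⟩
    exact ⟨k.cast_nonneg, hk⟩
end

section
/- Let α be a root of x^3 - 3x + 1. Then x^3 + 3x^2 - 3 = (x + α + 1)(x + α^2 - 1)(x - α^2 - α + 3) in Q(α)[x]; in particular the splitting field of x^3 + 3x^2 - 3 equals Q(α). -/
/-!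
The product of the three linear factors differs from `X ^ 3 + 3 * X ^ 2 - 3` by
`((α + 1) * X + α * (α + 2)) * (α ^ 3 - 3 * α + 1)`, so the factorization holds and the roots
`-(α + 1)`, `1 - α ^ 2`, `α ^ 2 + α - 3` all lie in `ℚ(α)`. Conversely `α` is recovered from the
first root as `-(-(α + 1)) - 1`.
-/

open Polynomial IntermediateField

theorem X_pow_three_add_three_mul_X_sq_sub_three_eq {R : Type*} [CommRing R] {α : R}
    (hα : α ^ 3 - 3 * α + 1 = 0) :
    (X ^ 3 + 3 * X ^ 2 - 3 : R[X])
      = (X + C (α + 1)) * (X + C (α ^ 2 - 1)) * (X - C (α ^ 2 + α - 3)) := by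
  have hCα : C α ^ 3 - 3 * C α + 1 = (0 : R[X]) := by
    simpa only [map_sub, map_add, map_mul, map_pow, map_ofNat, map_one, map_zero]
      using congrArg C hα
  simp only [map_sub, map_add, map_pow, map_ofNat, map_one]
  linear_combination ((C α + 1) * X + C α * (C α + 2)) * hCα

theorem rootSet_X_pow_three_add_three_mul_X_sq_sub_three {K : Type*} [Field K] [Algebra ℚ K]
    {α : K} (hα : α ^ 3 - 3 * α + 1 = 0) :
    (X ^ 3 + 3 * X ^ 2 - 3 : ℚ[X]).rootSet K = {-(α + 1), -(α ^ 2 - 1), α ^ 2 + α - 3} := by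
  classical
  have hne : (X + C (α + 1)) * (X + C (α ^ 2 - 1)) * (X - C (α ^ 2 + α - 3)) ≠ 0 := by
    simp only [ne_eq, mul_eq_zero, X_add_C_ne_zero, X_sub_C_ne_zero, or_self, not_false_eq_true]
  rw [rootSet_def, aroots_def]
  simp only [Polynomial.map_sub, Polynomial.map_add, Polynomial.map_pow, Polynomial.map_mul,
    map_X, Polynomial.map_ofNat]
  rw [X_pow_three_add_three_mul_X_sq_sub_three_eq hα, roots_mul hne,
    roots_mul (left_ne_zero_of_mul hne), roots_X_add_C, roots_X_add_C, roots_X_sub_C]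
  ext x
  simp

theorem adjoin_triple_eq_adjoin_simple {F E : Type*} [Field F] [Field E] [Algebra F E] (α : E) :
    F⟮-(α + 1), -(α ^ 2 - 1), α ^ 2 + α - 3⟯ = F⟮α⟯ := by
  have hα : α ∈ F⟮α⟯ := mem_adjoin_simple_self F α
  apply le_antisymm
  · simp only [adjoin_le_iff, Set.insert_subset_iff, Set.singleton_subset_iff, SetLike.mem_coe]
    exact ⟨neg_mem (add_mem hα (one_mem _)), neg_mem (sub_mem (pow_mem hα 2) (one_mem _)),
      sub_mem (add_mem (pow_mem hα 2) hα) (ofNat_mem _ 3)⟩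
  · rw [adjoin_simple_le_iff]
    have h : -(α + 1) ∈ F⟮-(α + 1), -(α ^ 2 - 1), α ^ 2 + α - 3⟯ := subset_adjoin F _ (by simp)
    simpa using sub_mem (neg_mem h) (one_mem _)

theorem factorization_x3_3x2_sub3 (K : Type) [Field K] [Algebra ℚ K] (α : K)
    (hα : α ^ 3 - 3 * α + 1 = 0) :
    (X ^ 3 + 3 * X ^ 2 - 3 : Polynomial K)
      = (X + C (α + 1)) * (X + C (α ^ 2 - 1)) * (X - C (α ^ 2 + α - 3)) ∧
    IntermediateField.adjoin ℚ ((X ^ 3 + 3 * X ^ 2 - 3 : Polynomial ℚ).rootSet K)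
      = IntermediateField.adjoin ℚ ({α} : Set K) := by
  refine ⟨X_pow_three_add_three_mul_X_sq_sub_three_eq hα, ?_⟩
  rw [rootSet_X_pow_three_add_three_mul_X_sq_sub_three hα]
  exact adjoin_triple_eq_adjoin_simple α
end
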